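/- Let n, m be positive integers, ζ = 2π/n, u : ℝ → ℂ be 2π-periodic, and ℓ, α, k integers with gcd(ℓ, m) = 1 and kℓ − αm = rn for some integer r. Define q_j(t) = e^{i t ℓ/m} e^{i j α ζ} u(t + j k ζ) for j ∈ ℤ. Let ℓ* satisfy ℓℓ* ≡ 1 (mod m) and set k̃ = k − r n ℓ*. Then q_j(t) = q_0(t + j k̃ ζ) for all j ∈ ℤ and t ∈ ℝ. -/

import Mathlib

/-!
Since `k̃ ≡ k (mod n)`, the shift `j k̃ ζ` differs from `j k ζ` by a multiple of `n ζ = 2π`, so the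
profile `u` does not see the difference. The resonance `k ℓ - α m = r n` together with
`ℓ ℓ* ≡ 1 (mod m)` gives `k̃ ℓ ≡ α m (mod m n)`, so the extra rotation `e^{i j k̃ ζ ℓ / m}` picked up
by `q₀` equals the site phase `e^{i j α ζ}` up to a multiple of `2π` in the exponent.
-/

open Real Function

theorem Function.Periodic.add_int_mul_eq_of_modEq {R β : Type*} [Ring R] {f : R → β} {N a b : ℤ}
    {δ : R} (hf : Periodic f (N * δ)) (h : a ≡ b [ZMOD N]) (t : R) :
    f (t + a * δ) = f (t + b * δ) := by
  obtain ⟨c, hc⟩ := Int.modEq_iff_dvd.mp h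
  have hb : t + b * δ = t + a * δ + c * (N * δ) := by
    rw [eq_add_of_sub_eq' hc]
    push_cast
    rw [← mul_assoc, Int.cast_comm c (N : R), add_mul, add_assoc]
  rw [hb, hf.int_mul c]

theorem Int.sub_mul_mul_inv_mul_modEq {k ℓ α r ℓstar : ℤ} {n m : ℤ}
    (hres : k * ℓ - α * m = r * n) (hinv : ℓ * ℓstar ≡ 1 [ZMOD m]) :
    (k - r * n * ℓstar) * ℓ ≡ α * m [ZMOD m * n] := by
  obtain ⟨c, hc⟩ := hinv.dvd
  exact Int.modEq_iff_dvd.mpr ⟨-r * c, by linear_combination -hres - r * n * hc⟩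

theorem choreography_theorem_general (n m : ℕ) (hn : 0 < n) (hm : 0 < m)
    (ζ : ℝ) (hζ : ζ = 2 * Real.pi / n)
    (u : ℝ → ℂ) (hu : ∀ t, u (t + 2 * Real.pi) = u t)
    (ℓ α k r : ℤ)
    (hres : k * ℓ - α * (m : ℤ) = r * (n : ℤ))
    (q : ℤ → ℝ → ℂ)
    (hq : ∀ (j : ℤ) (t : ℝ),
      q j t = Complex.exp (Complex.I * t * ℓ / m) * Complex.exp (Complex.I * j * α * ζ)
        * u (t + j * k * ζ))
    (ℓstar : ℤ) (hinv : ℓ * ℓstar ≡ 1 [ZMOD (m : ℤ)])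
    (ktilde : ℤ) (hk : ktilde = k - r * n * ℓstar) :
    ∀ (j : ℤ) (t : ℝ), q j t = q 0 (t + j * ktilde * ζ) := by
  intro j t
  have hnζ : (n : ℝ) * ζ = 2 * π := by rw [hζ]; field_simp
  have hmC : (m : ℂ) ≠ 0 := Nat.cast_ne_zero.mpr hm.ne'
  have hshift : j * ktilde ≡ j * k [ZMOD n] :=
    (Int.modEq_iff_dvd.mpr ⟨r * ℓstar, by rw [hk]; ring⟩).mul_left j
  have hphase : j * (ktilde * ℓ) ≡ j * (α * m) [ZMOD m * n] :=
    hk ▸ (Int.sub_mul_mul_inv_mul_modEq hres hinv).mul_left j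
  have hu_shift : u (t + j * ktilde * ζ) = u (t + j * k * ζ) := by
    have hper : Periodic u ((n : ℤ) * ζ) := by rw [Int.cast_natCast, hnζ]; exact hu
    simpa [mul_assoc] using hper.add_int_mul_eq_of_modEq hshift t
  have hexp_shift : Complex.exp (Complex.I * ↑(t + j * ktilde * ζ) * ℓ / m)
      = Complex.exp (Complex.I * t * ℓ / m) * Complex.exp (Complex.I * j * α * ζ) := by
    have hper : Periodic Complex.exp (((m * n : ℤ) : ℂ) * (Complex.I * ζ / m)) := by
      convert Complex.exp_periodic using 1
      push_cast
      field_simp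
      rw [← Complex.ofReal_natCast, ← Complex.ofReal_mul, hnζ]
      push_cast; ring
    have key := hper.add_int_mul_eq_of_modEq hphase (Complex.I * t * ℓ / m)
    rw [← Complex.exp_add]
    convert key using 2 <;> push_cast <;> field_simp
  rw [hq, hq 0, hexp_shift]
  simp [hu_shift]

theorem choreography_theorem (n m : ℕ) (hn : 0 < n) (hm : 0 < m)
    (ζ : ℝ) (hζ : ζ = 2 * Real.pi / n)
    (u : ℝ → ℂ) (hu : ∀ t, u (t + 2 * Real.pi) = u t)
    (ℓ α k r : ℤ) (hco : Int.gcd ℓ (m : ℤ) = 1)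
    (hres : k * ℓ - α * (m : ℤ) = r * (n : ℤ))
    (q : ℤ → ℝ → ℂ)
    (hq : ∀ (j : ℤ) (t : ℝ),
      q j t = Complex.exp (Complex.I * t * ℓ / m) * Complex.exp (Complex.I * j * α * ζ)
        * u (t + j * k * ζ))
    (ℓstar : ℤ) (hinv : ℓ * ℓstar ≡ 1 [ZMOD (m : ℤ)])
    (ktilde : ℤ) (hk : ktilde = k - r * n * ℓstar) :
    ∀ (j : ℤ) (t : ℝ), q j t = q 0 (t + j * ktilde * ζ) :=
  choreography_theorem_general n m hn hm ζ hζ u hu ℓ α k r hres q hq ℓstar hinv ktilde hk
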